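/- arXiv:1801.02748 — 2 statements merged into one kernel-verified Lean document; each statement's English description precedes it below -/
import Mathlib

section
/- Let $X_1, \ldots, X_d$ be independent identically distributed integrable real random variables and let $a^{(1)}, \ldots, a^{(d)}$ be positive reals with $\sum_{i=1}^d a^{(i)} = d$. Then for every convex function $c: \mathbb{R} \to \mathbb{R}$ for which both expectations exist, $\mathsf{E}[c(X_1 + \cdots + X_d)] \leq \mathsf{E}[c(a^{(1)} X_1 + \cdots + a^{(d)} X_d)]$; i.e., the unweighted sum is smaller than the weighted sum in the convex order. -/
/-!
Averaging the weighted sums `∑ i, a (σ i) * X i` over all permutations `σ` of the indices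
returns `∑ i, X i`, since every index receives the average weight `(∑ j, a j) / d = 1`.
Jensen's inequality for this average bounds `c (∑ i, X i)` pointwise by the average of the
`c (∑ i, a (σ i) * X i)`, and since an i.i.d. family is exchangeable, each of these has the
law of `c (∑ i, a i * X i)`.
-/

open MeasureTheory ProbabilityTheory

theorem Equiv.Perm.card_smul_sum_apply {ι M : Type*} [Fintype ι] [DecidableEq ι]
    [AddCommMonoid M] (f : ι → M) (i : ι) :
    Fintype.card ι • ∑ σ : Equiv.Perm ι, f (σ i) = Fintype.card (Equiv.Perm ι) • ∑ j, f j := by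
  have h_const : ∀ j, ∑ σ : Equiv.Perm ι, f (σ j) = ∑ σ : Equiv.Perm ι, f (σ i) := fun j =>
    Fintype.sum_equiv (Equiv.mulRight (Equiv.swap i j)) _ _ fun σ => by simp
  calc Fintype.card ι • ∑ σ : Equiv.Perm ι, f (σ i)
      = ∑ j, ∑ σ : Equiv.Perm ι, f (σ j) := by simp [h_const]
    _ = ∑ σ : Equiv.Perm ι, ∑ j, f (σ j) := Finset.sum_comm
    _ = Fintype.card (Equiv.Perm ι) • ∑ j, f j := by simp [Equiv.sum_comp]

theorem Equiv.Perm.sum_apply_eq_card_perm {ι : Type*} [Fintype ι] [DecidableEq ι] {a : ι → ℝ}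
    (ha : ∑ j, a j = Fintype.card ι) (i : ι) :
    ∑ σ : Equiv.Perm ι, a (σ i) = Fintype.card (Equiv.Perm ι) := by
  have h := Equiv.Perm.card_smul_sum_apply a i
  rw [ha, nsmul_eq_mul, nsmul_eq_mul, mul_comm (Fintype.card (Equiv.Perm ι) : ℝ)] at h
  have : Nonempty ι := ⟨i⟩
  exact mul_left_cancel₀ (Nat.cast_ne_zero.mpr Fintype.card_ne_zero) h

theorem ConvexOn.map_sum_le_average_perm {ι : Type*} [Fintype ι] [DecidableEq ι] {c : ℝ → ℝ}
    (hc : ConvexOn ℝ Set.univ c) {a : ι → ℝ} (ha : ∑ j, a j = Fintype.card ι) (x : ι → ℝ) :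
    c (∑ i, x i) ≤ (∑ σ : Equiv.Perm ι, c (∑ i, a (σ i) * x i)) / Fintype.card (Equiv.Perm ι) := by
  set N : ℝ := (Fintype.card (Equiv.Perm ι) : ℝ)
  have hN : N ≠ 0 := Nat.cast_ne_zero.mpr Fintype.card_ne_zero
  have h_center : ∑ σ : Equiv.Perm ι, N⁻¹ • ∑ i, a (σ i) * x i = ∑ i, x i := by
    simp only [smul_eq_mul, ← Finset.mul_sum]
    rw [Finset.sum_comm]
    simp only [← Finset.sum_mul, Equiv.Perm.sum_apply_eq_card_perm ha, ← Finset.mul_sum]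
    rw [← mul_assoc, inv_mul_cancel₀ hN, one_mul]
  have h_weights : ∑ _σ : Equiv.Perm ι, N⁻¹ = 1 := by
    rw [Finset.sum_const, nsmul_eq_mul, Finset.card_univ, mul_inv_cancel₀ hN]
  have h_jensen := hc.map_sum_le (t := Finset.univ)
    (p := fun σ : Equiv.Perm ι => ∑ i, a (σ i) * x i) (fun _ _ => by positivity) h_weights
    (fun _ _ => Set.mem_univ _)
  rw [h_center] at h_jensen
  rw [div_eq_inv_mul, Finset.mul_sum]
  simpa only [smul_eq_mul] using h_jensen

theorem ProbabilityTheory.iIndepFun.identDistrib_comp_perm {Ω ι β : Type*} [MeasurableSpace Ω]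
    [MeasurableSpace β] [Fintype ι] {μ : Measure Ω} {X : ι → Ω → β} (hindep : iIndepFun X μ)
    (hident : ∀ i j, IdentDistrib (X i) (X j) μ μ) (σ : Equiv.Perm ι) :
    IdentDistrib (fun ω i => X (σ i) ω) (fun ω i => X i ω) μ μ where
  aemeasurable_fst := aemeasurable_pi_lambda _ fun i => (hident (σ i) i).aemeasurable_fst
  aemeasurable_snd := aemeasurable_pi_lambda _ fun i => (hident i i).aemeasurable_fst
  map_eq := by
    rw [(hindep.precomp σ.injective).map_fun_eq_pi_map fun i => (hident (σ i) i).aemeasurable_fst,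
      hindep.map_fun_eq_pi_map fun i => (hident i i).aemeasurable_fst]
    exact congrArg Measure.pi (funext fun i => (hident (σ i) i).map_eq)

theorem ProbabilityTheory.iIndepFun.identDistrib_sum_perm_mul {Ω ι : Type*} [MeasurableSpace Ω]
    [Fintype ι] {μ : Measure Ω} {X : ι → Ω → ℝ} (hindep : iIndepFun X μ)
    (hident : ∀ i j, IdentDistrib (X i) (X j) μ μ) (a : ι → ℝ) (σ : Equiv.Perm ι) :
    IdentDistrib (fun ω => ∑ i, a (σ i) * X i ω) (fun ω => ∑ i, a i * X i ω) μ μ := by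
  have h_lin : Measurable fun v : ι → ℝ => ∑ i, a i * v i := by fun_prop
  have h_reindex : (fun ω => ∑ i, a (σ i) * X i ω)
      = (fun v : ι → ℝ => ∑ i, a i * v i) ∘ fun ω i => X (σ.symm i) ω := by
    funext ω
    rw [Function.comp_apply, ← Equiv.sum_comp σ fun j => a j * X (σ.symm j) ω]
    simp
  rw [h_reindex]
  exact (hindep.identDistrib_comp_perm hident σ.symm).comp h_lin

theorem stmt_2_general {Ω : Type*} [MeasurableSpace Ω] (μ : Measure Ω)
    (d : ℕ) (X : Fin d → Ω → ℝ)
    (hindep : iIndepFun X μ)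
    (hident : ∀ i j, IdentDistrib (X i) (X j) μ μ)
    (a : Fin d → ℝ) (hsum : ∑ i, a i = d)
    (c : ℝ → ℝ) (hconv : ConvexOn ℝ Set.univ c)
    (hcX : Integrable (fun ω => c (∑ i, X i ω)) μ)
    (hcY : Integrable (fun ω => c (∑ i, a i * X i ω)) μ) :
    μ[fun ω => c (∑ i, X i ω)] ≤ μ[fun ω => c (∑ i, a i * X i ω)] := by
  set N : ℝ := (Fintype.card (Equiv.Perm (Fin d)) : ℝ)
  have hc_meas : Measurable c := (continuousOn_univ.mp (hconv.continuousOn isOpen_univ)).measurable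
  have h_law : ∀ σ : Equiv.Perm (Fin d), IdentDistrib (fun ω => c (∑ i, a (σ i) * X i ω))
      (fun ω => c (∑ i, a i * X i ω)) μ μ := fun σ =>
    (hindep.identDistrib_sum_perm_mul hident a σ).comp hc_meas
  have h_int : ∀ σ : Equiv.Perm (Fin d), Integrable (fun ω => c (∑ i, a (σ i) * X i ω)) μ :=
    fun σ => (h_law σ).integrable_iff.mpr hcY
  have hN : N ≠ 0 := Nat.cast_ne_zero.mpr Fintype.card_ne_zero
  have h_card : ∑ i, a i = Fintype.card (Fin d) := by rw [hsum, Fintype.card_fin]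
  calc μ[fun ω => c (∑ i, X i ω)]
      ≤ μ[fun ω => (∑ σ : Equiv.Perm (Fin d), c (∑ i, a (σ i) * X i ω)) / N] := by
        refine integral_mono hcX ((integrable_finsetSum _ fun σ _ => h_int σ).div_const N) ?_
        exact fun ω => hconv.map_sum_le_average_perm h_card fun i => X i ω
    _ = (∑ σ : Equiv.Perm (Fin d), μ[fun ω => c (∑ i, a (σ i) * X i ω)]) / N := by
        rw [integral_div, integral_finsetSum _ fun σ _ => h_int σ]
    _ = μ[fun ω => c (∑ i, a i * X i ω)] := by
        simp only [fun σ => (h_law σ).integral_eq, Finset.sum_const, Finset.card_univ,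
          nsmul_eq_mul]
        exact mul_div_cancel_left₀ _ hN

theorem stmt_2 {Ω : Type*} [MeasurableSpace Ω] (μ : Measure Ω) [IsProbabilityMeasure μ]
    (d : ℕ) (hd : 1 ≤ d) (X : Fin d → Ω → ℝ)
    (hindep : iIndepFun X μ)
    (hident : ∀ i j, IdentDistrib (X i) (X j) μ μ)
    (hint : ∀ i, Integrable (X i) μ)
    (a : Fin d → ℝ) (hpos : ∀ i, 0 < a i) (hsum : ∑ i, a i = d)
    (c : ℝ → ℝ) (hconv : ConvexOn ℝ Set.univ c)
    (hcX : Integrable (fun ω => c (∑ i, X i ω)) μ)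
    (hcY : Integrable (fun ω => c (∑ i, a i * X i ω)) μ) :
    μ[fun ω => c (∑ i, X i ω)] ≤ μ[fun ω => c (∑ i, a i * X i ω)] :=
  stmt_2_general μ d X hindep hident a hsum c hconv hcX hcY
end

section
/- Let $X_1, \ldots, X_d$ be i.i.d. nonnegative random variables with finite variance and let $a^{(1)}, \ldots, a^{(d)}$ be positive reals summing to $d$. Then for every real $t$, $\mathsf{E}[\max(X_1 + \cdots + X_d - t, 0)] \leq \mathsf{E}[\max(a^{(1)} X_1 + \cdots + a^{(d)} X_d - t, 0)]$. -/
/-!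
Average the weighted sum over the `d` cyclic shifts of the weights: since every shift has the
same weight total `d`, the shifted weighted sums average to the unweighted sum, so by convexity
of `x ↦ max (x - t) 0` the stop-loss of the unweighted sum is at most the average of the
stop-losses of the shifted sums. An i.i.d. family is exchangeable, so each shifted weighted sum
has the law of the original weighted sum, and all these stop-losses are equal.
-/

open MeasureTheory ProbabilityTheory

namespace ProbabilityTheory

variable {ι Ω E : Type*} [Fintype ι] [MeasurableSpace Ω] [MeasurableSpace E]
  {μ : Measure Ω} {X : ι → Ω → E}

lemma iIndepFun.identDistrib_comp_perm_s9 (hindep : iIndepFun X μ)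
    (hident : ∀ i j, IdentDistrib (X i) (X j) μ μ) (π : Equiv.Perm ι) :
    IdentDistrib (fun ω i => X (π i) ω) (fun ω i => X i ω) μ μ := by
  have hX : ∀ i, AEMeasurable (X i) μ := fun i => (hident i i).aemeasurable_fst
  refine ⟨aemeasurable_pi_lambda _ fun i => hX (π i), aemeasurable_pi_lambda _ hX, ?_⟩
  rw [(hindep.precomp π.injective).map_fun_eq_pi_map fun i => hX (π i),
    hindep.map_fun_eq_pi_map hX]
  exact congrArg Measure.pi (funext fun i => (hident (π i) i).map_eq)

lemma iIndepFun.identDistrib_sum_perm_mul_s9 {X : ι → Ω → ℝ} (hindep : iIndepFun X μ)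
    (hident : ∀ i j, IdentDistrib (X i) (X j) μ μ) (a : ι → ℝ) (π : Equiv.Perm ι) :
    IdentDistrib (fun ω => ∑ i, a (π i) * X i ω) (fun ω => ∑ i, a i * X i ω) μ μ := by
  have hreindex : (fun ω => ∑ i, a (π i) * X i ω) = fun ω => ∑ j, a j * X (π.symm j) ω :=
    funext fun ω => by simpa using (Equiv.sum_comp π fun j => a j * X (π.symm j) ω)
  rw [hreindex]
  exact (hindep.identDistrib_comp_perm_s9 hident π.symm).comp
    (u := fun v : ι → ℝ => ∑ j, a j * v j)
    (Finset.measurable_sum _ fun j _ => (measurable_pi_apply j).const_mul _)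

end ProbabilityTheory

lemma sum_sum_mul_add_right {G : Type*} [AddGroup G] [Fintype G] (a x : G → ℝ) :
    ∑ k, ∑ i, a (i + k) * x i = (∑ i, a i) * ∑ i, x i := by
  rw [Finset.sum_comm, Finset.mul_sum]
  refine Finset.sum_congr rfl fun i _ => ?_
  rw [← Finset.sum_mul, Fintype.sum_equiv (Equiv.addLeft i) (fun k => a (i + k)) a fun _ => rfl]

lemma card_mul_max_sum_sub_le {G : Type*} [AddGroup G] [Fintype G] (a x : G → ℝ)
    (ha : ∑ i, a i = Fintype.card G) (t : ℝ) :
    Fintype.card G * max (∑ i, x i - t) 0 ≤ ∑ k, max (∑ i, a (i + k) * x i - t) 0 := by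
  have havg : Fintype.card G * (∑ i, x i - t) = ∑ k, (∑ i, a (i + k) * x i - t) := by
    rw [Finset.sum_sub_distrib, sum_sum_mul_add_right, ha, Finset.sum_const, nsmul_eq_mul,
      Finset.card_univ, mul_sub]
  rw [mul_max_of_nonneg _ _ (Nat.cast_nonneg _), mul_zero, havg]
  exact max_le (Finset.sum_le_sum fun k _ => le_max_left _ _)
    (Finset.sum_nonneg fun k _ => le_max_right _ _)

lemma MeasureTheory.Integrable.max_sum_sub_zero {ι Ω : Type*} [Fintype ι] [MeasurableSpace Ω]
    {μ : Measure Ω} [IsFiniteMeasure μ] {Y : ι → Ω → ℝ} (hY : ∀ i, Integrable (Y i) μ) (t : ℝ) :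
    Integrable (fun ω => max (∑ i, Y i ω - t) 0) μ :=
  ((integrable_finsetSum _ fun i _ => hY i).sub (integrable_const t)).pos_part

theorem stmt_9_general {Ω : Type*} [MeasurableSpace Ω] (μ : Measure Ω) [IsProbabilityMeasure μ]
    (d : ℕ) (hd : 1 ≤ d) (X : Fin d → Ω → ℝ)
    (hindep : iIndepFun X μ)
    (hident : ∀ i j, IdentDistrib (X i) (X j) μ μ)
    (hL2 : ∀ i, MemLp (X i) 2 μ)
    (a : Fin d → ℝ) (hsum : ∑ i, a i = d) :
    ∀ t : ℝ, μ[fun ω => max (∑ i, X i ω - t) 0] ≤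
      μ[fun ω => max (∑ i, a i * X i ω - t) 0] := by
  intro t
  have : NeZero d := ⟨by omega⟩
  have hX : ∀ i, Integrable (X i) μ := fun i => (hL2 i).integrable one_le_two
  have hshift (k : Fin d) : Integrable (fun ω => max (∑ i, a (i + k) * X i ω - t) 0) μ :=
    Integrable.max_sum_sub_zero (fun i => (hX i).const_mul _) t
  have hshift_eq (k : Fin d) : μ[fun ω => max (∑ i, a (i + k) * X i ω - t) 0] =
      μ[fun ω => max (∑ i, a i * X i ω - t) 0] :=
    ((hindep.identDistrib_sum_perm_mul_s9 hident a (Equiv.addRight k)).comp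
      ((measurable_id.sub_const t).max measurable_const)).integral_eq
  have hpt (ω : Ω) : (d : ℝ) * max (∑ i, X i ω - t) 0 ≤
      ∑ k, max (∑ i, a (i + k) * X i ω - t) 0 := by
    simpa using card_mul_max_sum_sub_le a (fun i => X i ω) (by simpa using hsum) t
  refine le_of_mul_le_mul_left ?_ (by exact_mod_cast hd : (0 : ℝ) < d)
  calc (d : ℝ) * μ[fun ω => max (∑ i, X i ω - t) 0]
      = μ[fun ω => (d : ℝ) * max (∑ i, X i ω - t) 0] := (integral_const_mul _ _).symm
    _ ≤ μ[fun ω => ∑ k, max (∑ i, a (i + k) * X i ω - t) 0] :=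
      integral_mono ((Integrable.max_sum_sub_zero hX t).const_mul _)
        (integrable_finsetSum _ fun k _ => hshift k) hpt
    _ = (d : ℝ) * μ[fun ω => max (∑ i, a i * X i ω - t) 0] := by
      rw [integral_finsetSum _ fun k _ => hshift k, Finset.sum_congr rfl fun k _ => hshift_eq k,
        Finset.sum_const, Finset.card_univ, Fintype.card_fin, nsmul_eq_mul]

theorem stmt_9 {Ω : Type*} [MeasurableSpace Ω] (μ : Measure Ω) [IsProbabilityMeasure μ]
    (d : ℕ) (hd : 1 ≤ d) (X : Fin d → Ω → ℝ)
    (hindep : iIndepFun X μ)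
    (hident : ∀ i j, IdentDistrib (X i) (X j) μ μ)
    (hXnn : ∀ i, ∀ᵐ ω ∂μ, 0 ≤ X i ω)
    (hL2 : ∀ i, MemLp (X i) 2 μ)
    (a : Fin d → ℝ) (hpos : ∀ i, 0 < a i) (hsum : ∑ i, a i = d) :
    ∀ t : ℝ, μ[fun ω => max (∑ i, X i ω - t) 0] ≤
      μ[fun ω => max (∑ i, a i * X i ω - t) 0] :=
  stmt_9_general μ d hd X hindep hident hL2 a hsum
end
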